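/- Let E be a finite-dimensional real inner product space, X ⊆ E, and let (x_k) be a sequence in X converging to x ∈ X. Then for every v ∈ E, v belongs to the polar (limsup_k T_{x_k}X)° of the outer limit of the tangent cones if and only if s(v, T_{x_k}X) → 0 as k → ∞. -/

import Mathlib

/-!
If `v` lies in the polar of the outer limit, the stationarity measures must tend to zero: otherwise
there are infinitely many unit vectors `z_k ∈ T_{x_k}X` with `⟪v, z_k⟫ ≥ ε`, and by compactness of
the unit sphere a subsequence converges to a unit vector of the outer limit with `⟪v, z⟫ ≥ ε > 0`.
Conversely, since tangent cones are cones, `⟪v, u⟫ ≤ ‖u‖ s(v, T_{x_k}X)` for every `u ∈ T_{x_k}X`,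
and passing to the limit along a sequence realising a point `u` of the outer limit gives `⟪v, u⟫ ≤ 0`.
-/

open Filter Topology

/-- The Bouligand tangent cone of `X ⊆ E` at `x`. -/
def bTangentCone {E : Type*} [NormedAddCommGroup E] [NormedSpace ℝ E]
    (X : Set E) (x : E) : Set E :=
  {v | ∃ (xk : ℕ → E) (τ : ℕ → ℝ), (∀ k, xk k ∈ X) ∧ (∀ k, 0 < τ k) ∧
    Tendsto τ atTop (𝓝 0) ∧ Tendsto (fun k => (τ k)⁻¹ • (xk k - x)) atTop (𝓝 v)}

/-- The polar of a set `K ⊆ E`: `K° = {w : ⟪w, z⟫ ≤ 0 for all z ∈ K}`. -/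
def polarCone {E : Type*} [NormedAddCommGroup E] [InnerProductSpace ℝ E] (K : Set E) : Set E :=
  {w | ∀ z ∈ K, (inner ℝ w z : ℝ) ≤ 0}

/-- The stationarity measure `s(v, K) = max(0, sup{⟪v, z⟫ : z ∈ K, ‖z‖ = 1})`; note that on `ℝ`,
Lean's `sSup` of the empty set is `0`, matching the convention `sup ∅ = 0`. -/
noncomputable def statMeasure {E : Type*} [NormedAddCommGroup E] [InnerProductSpace ℝ E]
    (v : E) (K : Set E) : ℝ :=
  max 0 (sSup {t : ℝ | ∃ z ∈ K, ‖z‖ = 1 ∧ (inner ℝ v z : ℝ) = t})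

/-- The outer limit `limsup_k S_k`: points `u` for which there are a strictly increasing sequence
of indices `(k_i)` and points `u_i ∈ S_{k_i}` with `u_i → u`. -/
def outerLimit {E : Type*} [NormedAddCommGroup E] (S : ℕ → Set E) : Set E :=
  {u | ∃ φ : ℕ → ℕ, StrictMono φ ∧
    ∃ uk : ℕ → E, (∀ i, uk i ∈ S (φ i)) ∧ Tendsto uk atTop (𝓝 u)}

section

variable {E : Type*} [NormedAddCommGroup E]

lemma bTangentCone_smul [NormedSpace ℝ E] {X : Set E} {y z : E} {c : ℝ} (hc : 0 < c)
    (hz : z ∈ bTangentCone X y) : c • z ∈ bTangentCone X y := by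
  obtain ⟨xs, τ, hX, hτ, hτ0, hl⟩ := hz
  refine ⟨xs, fun k => τ k / c, hX, fun k => div_pos (hτ k) hc, by simpa using hτ0.div_const c, ?_⟩
  refine (hl.const_smul c).congr fun k => ?_
  rw [smul_smul, inv_div, div_eq_mul_inv]

lemma outerLimit_inter_nonempty_of_frequently {K : ℕ → Set E} {C : Set E} (hC : IsCompact C)
    (h : ∃ᶠ k in atTop, (K k ∩ C).Nonempty) : (outerLimit K ∩ C).Nonempty := by
  obtain ⟨φ, hφ, hφC⟩ := extraction_of_frequently_atTop h
  choose z hzK hzC using hφC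
  obtain ⟨z₀, hz₀C, ψ, hψ, hz⟩ := hC.tendsto_subseq hzC
  exact ⟨z₀, ⟨φ ∘ ψ, hφ.comp hψ, z ∘ ψ, fun i => hzK (ψ i), hz⟩, hz₀C⟩

section statMeasure

variable [InnerProductSpace ℝ E] {K : Set E} {v : E}

lemma statMeasure_nonneg (v : E) (K : Set E) : 0 ≤ statMeasure v K := le_max_left _ _

lemma inner_le_statMeasure {z : E} (hz : z ∈ K) (hn : ‖z‖ = 1) :
    (inner ℝ v z : ℝ) ≤ statMeasure v K := by
  have hbdd : BddAbove {t : ℝ | ∃ z ∈ K, ‖z‖ = 1 ∧ (inner ℝ v z : ℝ) = t} := by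
    refine ⟨‖v‖, ?_⟩
    rintro t ⟨w, -, hwn, rfl⟩
    simpa [hwn] using real_inner_le_norm v w
  exact le_max_of_le_right (le_csSup hbdd ⟨z, hz, hn, rfl⟩)

lemma inner_le_norm_mul_statMeasure (hK : ∀ c : ℝ, 0 < c → ∀ z ∈ K, c • z ∈ K) {u : E}
    (hu : u ∈ K) : (inner ℝ v u : ℝ) ≤ ‖u‖ * statMeasure v K := by
  rcases eq_or_ne u 0 with rfl | hu0
  · simp
  have hpos : 0 < ‖u‖ := norm_pos_iff.2 hu0
  have hunit : ‖‖u‖⁻¹ • u‖ = 1 := by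
    rw [norm_smul, norm_inv, norm_norm, inv_mul_cancel₀ hpos.ne']
  have hle := inner_le_statMeasure (v := v) (hK _ (inv_pos.2 hpos) u hu) hunit
  rw [real_inner_smul_right] at hle
  rwa [inv_mul_le_iff₀ hpos] at hle

lemma exists_inner_gt_of_lt_statMeasure {ε : ℝ} (hε : 0 ≤ ε) (h : ε < statMeasure v K) :
    ∃ z ∈ K, ‖z‖ = 1 ∧ ε < (inner ℝ v z : ℝ) := by
  set T := {t : ℝ | ∃ z ∈ K, ‖z‖ = 1 ∧ (inner ℝ v z : ℝ) = t}
  have hεT : ε < sSup T := (lt_max_iff.1 h).resolve_left hε.not_gt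
  have hT : T.Nonempty := by
    by_contra hT
    rw [Set.not_nonempty_iff_eq_empty.1 hT, Real.sSup_empty] at hεT
    exact hε.not_gt hεT
  obtain ⟨_, ⟨z, hzK, hzn, rfl⟩, hz⟩ := exists_lt_of_lt_csSup hT hεT
  exact ⟨z, hzK, hzn, hz⟩

theorem tendsto_statMeasure_of_mem_polarCone_outerLimit [FiniteDimensional ℝ E]
    {S : ℕ → Set E} (hv : v ∈ polarCone (outerLimit S)) :
    Tendsto (fun k => statMeasure v (S k)) atTop (𝓝 0) := by
  refine tendsto_order.2 ⟨fun a ha => .of_forall fun k => ha.trans_le (statMeasure_nonneg v _),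
    fun ε hε => ?_⟩
  by_contra hfreq
  rw [not_eventually] at hfreq
  set C := Metric.sphere (0 : E) 1 ∩ {z | ε / 2 ≤ (inner ℝ v z : ℝ)}
  have hC : IsCompact C := (isCompact_sphere 0 1).inter_right <|
    isClosed_le continuous_const (continuous_const.inner continuous_id)
  have hSC : ∃ᶠ k in atTop, (S k ∩ C).Nonempty := hfreq.mono fun k hk => by
    obtain ⟨z, hzK, hzn, hz⟩ := exists_inner_gt_of_lt_statMeasure (v := v) (K := S k)
      (half_pos hε).le ((half_lt_self hε).trans_le (not_lt.1 hk))
    exact ⟨z, hzK, by simpa using hzn, hz.le⟩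
  obtain ⟨z, hzK, -, hz⟩ := outerLimit_inter_nonempty_of_frequently hC hSC
  exact (hv z hzK).not_gt ((half_pos hε).trans_le hz)

theorem mem_polarCone_outerLimit_of_tendsto {S : ℕ → Set E}
    (hS : ∀ k, ∀ c : ℝ, 0 < c → ∀ z ∈ S k, c • z ∈ S k)
    (h : Tendsto (fun k => statMeasure v (S k)) atTop (𝓝 0)) : v ∈ polarCone (outerLimit S) := by
  rintro u ⟨φ, hφ, uk, huk, hu⟩
  have hbound : Tendsto (fun i => ‖uk i‖ * statMeasure v (S (φ i))) atTop (𝓝 (‖u‖ * 0)) :=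
    hu.norm.mul (h.comp hφ.tendsto_atTop)
  rw [mul_zero] at hbound
  exact le_of_tendsto_of_tendsto' (tendsto_const_nhds.inner hu) hbound
    fun i => inner_le_norm_mul_statMeasure (hS (φ i)) (huk i)

end statMeasure

end

theorem stmt7_general {E : Type*} [NormedAddCommGroup E] [InnerProductSpace ℝ E] [FiniteDimensional ℝ E]
    (X : Set E) (xk : ℕ → E) (v : E) :
    v ∈ polarCone (outerLimit fun k => bTangentCone X (xk k)) ↔
      Tendsto (fun k => statMeasure v (bTangentCone X (xk k))) atTop (𝓝 0) :=
  ⟨tendsto_statMeasure_of_mem_polarCone_outerLimit,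
    mem_polarCone_outerLimit_of_tendsto fun _ _ hc _ hz => bTangentCone_smul hc hz⟩

/-- Let `E` be a finite-dimensional real inner product space, `X ⊆ E`, and `(x_k)` a
sequence in `X` converging to `x ∈ X`. Then for every `v ∈ E`, `v` belongs to the polar
`(limsup_k T_{x_k}X)°` of the outer limit of the tangent cones if and only if
`s(v, T_{x_k}X) → 0` as `k → ∞`. -/
theorem stmt7 {E : Type*} [NormedAddCommGroup E] [InnerProductSpace ℝ E] [FiniteDimensional ℝ E]
    (X : Set E) (x : E) (hx : x ∈ X) (xk : ℕ → E) (hxk : ∀ k, xk k ∈ X)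
    (hlim : Tendsto xk atTop (𝓝 x)) (v : E) :
    v ∈ polarCone (outerLimit fun k => bTangentCone X (xk k)) ↔
      Tendsto (fun k => statMeasure v (bTangentCone X (xk k))) atTop (𝓝 0) :=
  stmt7_general X xk v
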